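/- Assume Hypothesis (H). Then for every k ≥ 2 and every positive integer i, the set of x ∈ (0,1) (with infinite ROE) whose k-th difference ROE digit equals i has Lebesgue measure at most l_k: λ({x : α_k(x) = i}) ≤ l_k. -/

import Mathlib

open MeasureTheory Set

namespace ROE

/-- The `x`-sequence of the restricted Oppenheim algorithm applied to `x`:
index `k` corresponds to the paper's `x_{k+1}`, and `a k`, `b k` correspond to the paper's
`a_{k+1}`, `b_{k+1}`.  So `X a b x 0 = x₁ = x` and
`x_{k+2} = (b_{k+1}(d_{k+1})/a_{k+1}(d_{k+1})) · (x_{k+1} - 1/d_{k+1})`. -/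
noncomputable def X (a b : ℕ → ℕ → ℕ) (x : ℝ) : ℕ → ℝ
  | 0 => x
  | k + 1 =>
      let xk := X a b x k
      let d : ℕ := (⌊1 / xk⌋).toNat + 1
      ((b k d : ℝ) / (a k d : ℝ)) * (xk - 1 / (d : ℝ))

/-- The digit `d_{k+1}(x) = ⌊1/x_{k+1}⌋ + 1` of the restricted Oppenheim expansion. -/
noncomputable def D (a b : ℕ → ℕ → ℕ) (x : ℝ) (k : ℕ) : ℕ :=
  (⌊1 / X a b x k⌋).toNat + 1

/-- The restricted Oppenheim expansion of `x` is infinite: all `x_n` lie in `(0,1)`. -/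
def InfiniteROE (a b : ℕ → ℕ → ℕ) (x : ℝ) : Prop :=
  ∀ k, X a b x k ∈ Set.Ioo (0 : ℝ) 1

/-- The finite sequence `(j 0, …, j (n-1))` (the paper's `(j_1, …, j_n)`) is admissible:
`j_1 ≥ 2` and `j_{i+1} > h_i(j_i)`.  Here `h i` corresponds to the paper's `h_{i+1}`. -/
def Admissible (h : ℕ → ℕ → ℕ) (n : ℕ) (j : ℕ → ℕ) : Prop :=
  2 ≤ j 0 ∧ ∀ i, i + 1 < n → h i (j i) < j (i + 1)

/-- The cylinder of rank `n` with base `(j 0, …, j (n-1))`: the set of `x ∈ (0,1)` with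
infinite ROE whose first `n` digits are `j 0, …, j (n-1)`. -/
def cylinder (a b : ℕ → ℕ → ℕ) (n : ℕ) (j : ℕ → ℕ) : Set ℝ :=
  {x | x ∈ Set.Ioo (0 : ℝ) 1 ∧ InfiniteROE a b x ∧ ∀ i < n, D a b x i = j i}

/-- The difference-ROE digit `α_{k+1}(x)`: `α₁ = d₁ - 1`, `α_{k+2} = d_{k+2} - h_{k+1}(d_{k+1})`. -/
noncomputable def alpha (a b h : ℕ → ℕ → ℕ) (x : ℝ) : ℕ → ℕ
  | 0 => D a b x 0 - 1
  | k + 1 => D a b x (k + 1) - h k (D a b x k)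

/-- The digit sequence `d` reconstructed from a sequence `α` of difference-ROE symbols:
`d₁ = α₁ + 1`, `d_{k+2} = h_{k+1}(d_{k+1}) + α_{k+2}`. -/
def dSeq (h : ℕ → ℕ → ℕ) (α : ℕ → ℕ) : ℕ → ℕ
  | 0 => α 0 + 1
  | k + 1 => h k (dSeq h α k) + α (k + 1)

/-- The real number whose difference-ROE digits are `(α k)`:
`Φ(α) = Σ_{n≥1} (∏_{i=1}^{n-1} a_i(d_i)/b_i(d_i)) · (1/d_n)`. -/
noncomputable def Phi (a b h : ℕ → ℕ → ℕ) (α : ℕ → ℕ) : ℝ :=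
  ∑' n : ℕ, (∏ i ∈ Finset.range n, (a i (dSeq h α i) : ℝ) / (b i (dSeq h α i) : ℝ)) *
    (1 / (dSeq h α n : ℝ))

end ROE

/-!
On the cylinder of `x` with prescribed admissible digits `d_1, …, d_n`, the map `x ↦ x_n` is
affine and increasing, and the cylinder is exactly the preimage of `(1/d_n, 1/(d_n - 1)]`, so its
length is `1/(d_n - 1) - 1/d_n` divided by the slope. Once `d_{k-1}` is known, `α_k = i` forces
`d_k = h_{k-1}(d_{k-1}) + i`, so inside each cylinder of rank `k - 1` the set `{α_k = i}` lies in a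
single cylinder of rank `k`. With `h = h_{k-1}(d_{k-1})`, the ratio of their lengths is
`h / (d_k (d_k - 1)) ≤ 1 / h = b_{k-1}(d_{k-1}) / (a_{k-1}(d_{k-1}) d_{k-1} (d_{k-1} - 1)) < l_k`.
Summing over the countably many cylinders of rank `k - 1` gives `λ{α_k = i} ≤ l_k`.
-/

theorem measure_le_mul_of_forall_fiber {α β : Type*} [MeasurableSpace α] [MeasurableSpace β]
    [Countable β] [MeasurableSingletonClass β] {μ : Measure α} {f : α → β}
    (hf : Measurable f) {S U : Set α} (hU : MeasurableSet U) (c : ENNReal)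
    (hS : ∀ x ∈ S, μ (S ∩ f ⁻¹' {f x}) ≤ c * μ (U ∩ f ⁻¹' {f x})) :
    μ S ≤ c * μ U := by
  have hfiber : ∀ y, μ (S ∩ f ⁻¹' {y}) ≤ c * μ (U ∩ f ⁻¹' {y}) := by
    intro y
    rcases (S ∩ f ⁻¹' {y}).eq_empty_or_nonempty with hempty | ⟨x, hxS, rfl⟩
    · simp [hempty]
    · exact hS x hxS
  have hunion : ∀ T : Set α, ⋃ y, T ∩ f ⁻¹' {y} = T := fun T => by ext; simp
  calc μ S = μ (⋃ y, S ∩ f ⁻¹' {y}) := by rw [hunion]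
    _ ≤ ∑' y, μ (S ∩ f ⁻¹' {y}) := measure_iUnion_le _
    _ ≤ ∑' y, c * μ (U ∩ f ⁻¹' {y}) := ENNReal.tsum_le_tsum hfiber
    _ = c * μ U := by
      rw [ENNReal.tsum_mul_left, ← measure_iUnion, hunion]
      · exact fun y y' hne =>
          ((disjoint_singleton.2 hne).preimage f).inter_left' U |>.inter_right' U
      · exact fun y => hU.inter (hf (measurableSet_singleton y))

theorem volume_preimage_affine {c : ℝ} (hc : c ≠ 0) (e : ℝ) (s : Set ℝ) :
    volume ((fun x => c * x + e) ⁻¹' s) = ENNReal.ofReal |c⁻¹| * volume s := by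
  rw [show (fun x => c * x + e) ⁻¹' s = (c * ·) ⁻¹' ((· + e) ⁻¹' s) from rfl,
    Real.volume_preimage_mul_left hc, measure_preimage_add_right]

section DigitIntervals

variable {A B H j : ℝ}

theorem one_div_sub_one_sub_one_div_eq (hA : 0 < A) (hj : 1 < j)
    (hBH : B * H = A * j * (j - 1)) : 1 / (j - 1) - 1 / j = A / (B * H) := by
  have : j - 1 ≠ 0 := by linarith
  rw [hBH]
  field_simp
  ring

theorem pos_of_mul_eq_mul_mul_sub_one (hA : 0 < A) (hB : 0 < B) (hj : 1 < j)
    (hBH : B * H = A * j * (j - 1)) : 0 < H :=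
  pos_of_mul_pos_right (hBH ▸ mul_pos (mul_pos hA (by linarith)) (by linarith)) hB.le

theorem mem_Ioc_iff_mul_sub_mem_Ioc {y : ℝ} (hA : 0 < A) (hB : 0 < B) (hj : 1 < j)
    (hBH : B * H = A * j * (j - 1)) :
    y ∈ Ioc (1 / j) (1 / (j - 1)) ↔ B / A * (y - 1 / j) ∈ Ioc 0 (1 / H) := by
  have hH := pos_of_mul_eq_mul_mul_sub_one hA hB hj hBH
  have hBA : 0 < B / A := div_pos hB hA
  have hgap : 1 / H / (B / A) = 1 / (j - 1) - 1 / j := by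
    rw [one_div_sub_one_sub_one_div_eq hA hj hBH]
    field_simp
  rw [mem_Ioc, mem_Ioc, mul_pos_iff_of_pos_left hBA, sub_pos, ← le_div_iff₀' hBA, hgap,
    sub_le_sub_iff_right]

theorem div_mul_one_div_sub_one_div_le {j' : ℝ} (hA : 0 < A) (hB : 0 < B) (hj : 1 < j)
    (hBH : B * H = A * j * (j - 1)) (hj' : H + 1 ≤ j') :
    A / B * (1 / (j' - 1) - 1 / j') ≤ B / (A * j * (j - 1)) * (1 / (j - 1) - 1 / j) := by
  have hH := pos_of_mul_eq_mul_mul_sub_one hA hB hj hBH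
  have hgap' : 1 / (j' - 1) - 1 / j' = 1 / (j' * (j' - 1)) := by
    have : j' - 1 ≠ 0 := by linarith
    have : j' ≠ 0 := by linarith
    field_simp
    ring
  rw [one_div_sub_one_sub_one_div_eq hA hj hBH, ← hBH, hgap',
    show B / (B * H) * (A / (B * H)) = A / B * (1 / (H * H)) by field_simp]
  -- `j' (j' - 1) ≥ (H + 1) H ≥ H ^ 2`
  gcongr <;> linarith

end DigitIntervals

namespace ROE

structure IsROEData (a b h : ℕ → ℕ → ℕ) : Prop where
  a_pos : ∀ k j, 2 ≤ j → 0 < a k j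
  b_pos : ∀ k j, 2 ≤ j → 0 < b k j
  b_mul_h : ∀ k j, 2 ≤ j → b k j * h k j = a k j * j * (j - 1)

section Cylinders

variable {a b h : ℕ → ℕ → ℕ}

theorem IsROEData.h_pos (hP : IsROEData a b h) (k : ℕ) {j : ℕ} (hj : 2 ≤ j) : 0 < h k j := by
  have hprod : 0 < b k j * h k j := by
    rw [hP.b_mul_h k j hj]
    exact Nat.mul_pos (Nat.mul_pos (hP.a_pos k j hj) (by omega)) (by omega)
  exact Nat.pos_of_mul_pos_left hprod

theorem IsROEData.cast_b_mul_h (hP : IsROEData a b h) (k : ℕ) {j : ℕ} (hj : 2 ≤ j) :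
    (b k j : ℝ) * h k j = a k j * j * (j - 1) := by
  rw [← Nat.cast_pred (by omega)]
  exact_mod_cast hP.b_mul_h k j hj

theorem X_succ (x : ℝ) (k : ℕ) :
    X a b x (k + 1) = (b k (D a b x k) : ℝ) / a k (D a b x k) * (X a b x k - 1 / D a b x k) :=
  rfl

theorem D_eq_iff {x : ℝ} {n J : ℕ} (hJ : 2 ≤ J) :
    D a b x n = J ↔ X a b x n ∈ Ioc (1 / (J : ℝ)) (1 / ((J : ℝ) - 1)) := by
  have hJ1 : (0 : ℝ) < J - 1 := by
    have : (2 : ℝ) ≤ J := by exact_mod_cast hJ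
    linarith
  have hfloor : D a b x n = J ↔ ⌊1 / X a b x n⌋ = (J : ℤ) - 1 := by
    unfold D; omega
  rw [hfloor, Int.floor_eq_iff]
  push_cast
  rw [sub_add_cancel]
  constructor
  · rintro ⟨hle, hlt⟩
    have hpos : 0 < X a b x n := one_div_pos.1 (hJ1.trans_le hle)
    exact ⟨(one_div_lt hpos (by linarith)).1 hlt, (le_one_div hJ1 hpos).1 hle⟩
  · rintro ⟨hlt, hle⟩
    have hpos : 0 < X a b x n := lt_trans (by positivity) hlt
    exact ⟨(le_one_div hJ1 hpos).2 hle, (one_div_lt hpos (by linarith)).2 hlt⟩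

theorem two_le_D {x : ℝ} {n : ℕ} (hx : X a b x n ∈ Ioo 0 1) : 2 ≤ D a b x n := by
  have hfloor : 1 ≤ ⌊1 / X a b x n⌋ :=
    Int.le_floor.2 (by rw [Int.cast_one, le_one_div one_pos hx.1, div_one]; exact hx.2.le)
  unfold D; omega

theorem h_D_lt_D_succ (hP : IsROEData a b h) {x : ℝ} (hx : InfiniteROE a b x) (n : ℕ) :
    h n (D a b x n) < D a b x (n + 1) := by
  have hd := two_le_D (hx n)
  have hd' := two_le_D (hx (n + 1))
  have hstep := (mem_Ioc_iff_mul_sub_mem_Ioc (H := h n (D a b x n))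
    (by exact_mod_cast hP.a_pos n _ hd) (by exact_mod_cast hP.b_pos n _ hd)
    (by exact_mod_cast hd) (hP.cast_b_mul_h n hd)).1 ((D_eq_iff hd).1 rfl)
  rw [← X_succ] at hstep
  have hlt : 1 / (D a b x (n + 1) : ℝ) < 1 / h n (D a b x n) :=
    ((D_eq_iff hd').1 rfl).1.trans_le hstep.2
  exact_mod_cast (one_div_lt_one_div (by positivity) (by exact_mod_cast hP.h_pos n hd)).1 hlt

theorem D_succ_eq_of_alpha_eq (hP : IsROEData a b h) {x y : ℝ} (hx : InfiniteROE a b x)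
    (hy : InfiniteROE a b y) {n : ℕ} (hD : D a b x n = D a b y n)
    (hα : alpha a b h x (n + 1) = alpha a b h y (n + 1)) : D a b x (n + 1) = D a b y (n + 1) := by
  have hx' := h_D_lt_D_succ hP hx n
  have hy' := h_D_lt_D_succ hP hy n
  simp only [alpha] at hα
  rw [hD] at hα hx'
  omega

theorem measurable_D_of_measurable_X {k : ℕ} (hX : Measurable fun x => X a b x k) :
    Measurable fun x => D a b x k :=
  (measurable_from_top (f := fun z : ℤ => z.toNat + 1)).comp (measurable_const.div hX).floor

theorem measurable_X (k : ℕ) : Measurable fun x => X a b x k := by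
  induction k with
  | zero => exact measurable_id
  | succ k ih =>
    have hcast : ∀ g : ℕ → ℝ, Measurable fun x => g (D a b x k) := fun g =>
      (measurable_from_nat (f := g)).comp (measurable_D_of_measurable_X ih)
    change Measurable fun x =>
      (b k (D a b x k) : ℝ) / a k (D a b x k) * (X a b x k - 1 / D a b x k)
    exact ((hcast fun n => (b k n : ℝ)).div (hcast fun n => (a k n : ℝ))).mul
      (ih.sub (measurable_const.div (hcast Nat.cast)))

theorem measurable_D (k : ℕ) : Measurable fun x => D a b x k :=
  measurable_D_of_measurable_X (measurable_X k)

def digitCylinder (a b : ℕ → ℕ → ℕ) (t : ℕ) (J : ℕ → ℕ) : Set ℝ :=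
  {x | ∀ n < t, D a b x n = J n}

theorem digitCylinder_succ (t : ℕ) (J : ℕ → ℕ) :
    digitCylinder a b (t + 1) J = digitCylinder a b t J ∩ {x | D a b x t = J t} := by
  ext x
  simp only [digitCylinder, mem_inter_iff, mem_ofPred_eq, Nat.lt_succ_iff_lt_or_eq, or_imp,
    forall_and, forall_eq]

noncomputable def cylinderSlope (a b : ℕ → ℕ → ℕ) (J : ℕ → ℕ) : ℕ → ℝ
  | 0 => 1
  | t + 1 => (b t (J t) : ℝ) / a t (J t) * cylinderSlope a b J t

noncomputable def cylinderOffset (a b : ℕ → ℕ → ℕ) (J : ℕ → ℕ) : ℕ → ℝ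
  | 0 => 0
  | t + 1 => (b t (J t) : ℝ) / a t (J t) * (cylinderOffset a b J t - 1 / J t)

theorem cylinderSlope_succ_mul_add (J : ℕ → ℕ) (t : ℕ) (x : ℝ) :
    cylinderSlope a b J (t + 1) * x + cylinderOffset a b J (t + 1) =
      (b t (J t) : ℝ) / a t (J t) *
        (cylinderSlope a b J t * x + cylinderOffset a b J t - 1 / J t) := by
  rw [cylinderSlope, cylinderOffset]
  ring

theorem X_eq_of_mem_digitCylinder {J : ℕ → ℕ} {t : ℕ} {x : ℝ}
    (hx : x ∈ digitCylinder a b t J) :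
    X a b x t = cylinderSlope a b J t * x + cylinderOffset a b J t := by
  induction t with
  | zero => simp [X, cylinderSlope, cylinderOffset]
  | succ t ih =>
    rw [digitCylinder_succ] at hx
    rw [X_succ, hx.2, ih hx.1, cylinderSlope_succ_mul_add]

theorem cylinderSlope_pos (hP : IsROEData a b h) {J : ℕ → ℕ} (hJ : ∀ n, 2 ≤ J n)
    (t : ℕ) :
    0 < cylinderSlope a b J t := by
  induction t with
  | zero => exact one_pos
  | succ t ih =>
    have := hP.a_pos t _ (hJ t)
    have := hP.b_pos t _ (hJ t)
    rw [cylinderSlope]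
    positivity

theorem digitCylinder_succ_eq_preimage (hP : IsROEData a b h) {J : ℕ → ℕ}
    (hJ : ∀ n, 2 ≤ J n) (hadm : ∀ n, h n (J n) < J (n + 1)) (t : ℕ) :
    digitCylinder a b (t + 1) J =
      (fun x => cylinderSlope a b J t * x + cylinderOffset a b J t) ⁻¹'
        Ioc (1 / (J t : ℝ)) (1 / ((J t : ℝ) - 1)) := by
  induction t with
  | zero =>
    ext x
    simp [digitCylinder, cylinderSlope, cylinderOffset, D_eq_iff (hJ 0), X]
  | succ t ih =>
    have hdown : ∀ x, cylinderSlope a b J (t + 1) * x + cylinderOffset a b J (t + 1) ∈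
        Ioc (1 / (J (t + 1) : ℝ)) (1 / ((J (t + 1) : ℝ) - 1)) →
        x ∈ digitCylinder a b (t + 1) J := by
      intro x hmem
      have hh : (0 : ℝ) < h t (J t) := by exact_mod_cast hP.h_pos t (hJ t)
      have hJ' : (h t (J t) : ℝ) + 1 ≤ J (t + 1) := by exact_mod_cast hadm t
      rw [ih]
      refine (mem_Ioc_iff_mul_sub_mem_Ioc (by exact_mod_cast hP.a_pos t _ (hJ t))
        (by exact_mod_cast hP.b_pos t _ (hJ t)) (by exact_mod_cast hJ t)
        (hP.cast_b_mul_h t (hJ t))).2 ?_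
      rw [← cylinderSlope_succ_mul_add]
      exact ⟨lt_trans (one_div_pos.2 (by linarith)) hmem.1,
        hmem.2.trans (one_div_le_one_div_of_le hh (by linarith))⟩
    ext x
    rw [digitCylinder_succ, mem_inter_iff, mem_ofPred_eq, D_eq_iff (hJ _)]
    constructor
    · rintro ⟨hx, hD⟩
      rwa [X_eq_of_mem_digitCylinder hx] at hD
    · intro hmem
      have hx := hdown x hmem
      exact ⟨hx, by rwa [X_eq_of_mem_digitCylinder hx]⟩

theorem digitCylinder_succ_subset_Ioc {J : ℕ → ℕ} (hJ0 : 2 ≤ J 0) (t : ℕ) :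
    digitCylinder a b (t + 1) J ⊆ Ioc 0 1 := by
  intro x hx
  have hx0 := (D_eq_iff hJ0).1 (hx 0 t.succ_pos)
  have : (2 : ℝ) ≤ J 0 := by exact_mod_cast hJ0
  exact ⟨lt_trans (by positivity) hx0.1,
    hx0.2.trans (by rw [div_le_one (by linarith)]; linarith)⟩

theorem volume_digitCylinder_succ (hP : IsROEData a b h) {J : ℕ → ℕ} (hJ : ∀ n, 2 ≤ J n)
    (hadm : ∀ n, h n (J n) < J (n + 1)) (t : ℕ) :
    volume (digitCylinder a b (t + 1) J) =
      ENNReal.ofReal ((1 / ((J t : ℝ) - 1) - 1 / J t) / cylinderSlope a b J t) := by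
  have hs := cylinderSlope_pos hP hJ t
  rw [digitCylinder_succ_eq_preimage hP hJ hadm, volume_preimage_affine hs.ne', Real.volume_Ioc,
    abs_of_pos (inv_pos.2 hs), ← ENNReal.ofReal_mul (inv_nonneg.2 hs.le), inv_mul_eq_div]

theorem volume_digitCylinder_succ_succ_le (hP : IsROEData a b h) {J : ℕ → ℕ}
    (hJ : ∀ n, 2 ≤ J n) (hadm : ∀ n, h n (J n) < J (n + 1)) (t : ℕ) :
    volume (digitCylinder a b (t + 2) J) ≤
      ENNReal.ofReal ((b t (J t) : ℝ) / (a t (J t) * J t * (J t - 1))) *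
        volume (digitCylinder a b (t + 1) J) := by
  have hA : (0 : ℝ) < a t (J t) := by exact_mod_cast hP.a_pos t _ (hJ t)
  have hB : (0 : ℝ) < b t (J t) := by exact_mod_cast hP.b_pos t _ (hJ t)
  have hj : (1 : ℝ) < J t := by exact_mod_cast hJ t
  have hJ' : (h t (J t) : ℝ) + 1 ≤ J (t + 1) := by exact_mod_cast hadm t
  have hs := cylinderSlope_pos hP hJ t
  rw [volume_digitCylinder_succ hP hJ hadm, volume_digitCylinder_succ hP hJ hadm,
    ← ENNReal.ofReal_mul (div_nonneg hB.le (mul_nonneg (by positivity) (by linarith)))]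
  apply ENNReal.ofReal_le_ofReal
  rw [cylinderSlope, ← div_div, mul_div_assoc', div_div_eq_mul_div, mul_comm _ (a t (J t) : ℝ),
    mul_div_right_comm]
  exact div_le_div_of_nonneg_right
    (div_mul_one_div_sub_one_div_le hA hB hj (hP.cast_b_mul_h t (hJ t)) hJ') hs.le

end Cylinders

theorem measure_alpha_eq_le_general (a b h : ℕ → ℕ → ℕ)
    (ha : ∀ k j, 2 ≤ j → 0 < a k j) (hb : ∀ k j, 2 ≤ j → 0 < b k j)
    (hab : ∀ k j, 2 ≤ j → b k j * h k j = a k j * j * (j - 1))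
    (l : ℕ → ℝ)
    (hH : ∀ x : ℝ, InfiniteROE a b x → ∀ m : ℕ,
      (b m (D a b x m) : ℝ) /
          ((a m (D a b x m) : ℝ) * (D a b x m : ℝ) * ((D a b x m : ℝ) - 1)) < l (m + 2))
    (k : ℕ) (hk : 2 ≤ k) (i : ℕ) :
    volume {x : ℝ | x ∈ Set.Ioo (0 : ℝ) 1 ∧ InfiniteROE a b x ∧ alpha a b h x (k - 1) = i} ≤
      ENNReal.ofReal (l k) := by
  obtain ⟨m, rfl⟩ : ∃ m, k = m + 2 := ⟨k - 2, by omega⟩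
  have hP : IsROEData a b h := ⟨ha, hb, hab⟩
  set S :=
    {x : ℝ | x ∈ Set.Ioo (0 : ℝ) 1 ∧ InfiniteROE a b x ∧ alpha a b h x (m + 2 - 1) = i}
  let prefixDigits : ℝ → Fin (m + 1) → ℕ := fun x n => D a b x n
  suffices hfiber : ∀ x₀ ∈ S, volume (S ∩ prefixDigits ⁻¹' {prefixDigits x₀}) ≤
      ENNReal.ofReal (l (m + 2)) * volume (Ioc 0 1 ∩ prefixDigits ⁻¹' {prefixDigits x₀}) by
    simpa using measure_le_mul_of_forall_fiber
      (measurable_pi_lambda prefixDigits fun n => measurable_D (n : ℕ)) measurableSet_Ioc _ hfiber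
  rintro x₀ ⟨-, hx₀, hα₀⟩
  have hJ : ∀ n, 2 ≤ D a b x₀ n := fun n => two_le_D (hx₀ n)
  have hprefix :
      prefixDigits ⁻¹' {prefixDigits x₀} = digitCylinder a b (m + 1) (D a b x₀) := by
    ext x
    simp [prefixDigits, digitCylinder, funext_iff, Fin.forall_iff]
  have hsub : S ∩ digitCylinder a b (m + 1) (D a b x₀) ⊆
      digitCylinder a b (m + 2) (D a b x₀) := by
    rintro x ⟨⟨-, hx, hα⟩, hxcyl⟩
    rw [digitCylinder_succ]
    exact ⟨hxcyl,
      D_succ_eq_of_alpha_eq hP hx hx₀ (hxcyl m m.lt_succ_self) (hα.trans hα₀.symm)⟩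
  rw [hprefix, inter_eq_right.2 (digitCylinder_succ_subset_Ioc (hJ 0) m)]
  calc volume (S ∩ digitCylinder a b (m + 1) (D a b x₀))
      ≤ volume (digitCylinder a b (m + 2) (D a b x₀)) := measure_mono hsub
    _ ≤ _ := volume_digitCylinder_succ_succ_le hP hJ (h_D_lt_D_succ hP hx₀) m
    _ ≤ _ := by gcongr; exact (hH x₀ hx₀ m).le

/-- Assume Hypothesis (H): there is a sequence `(l_k)_{k≥2}` of positive reals
with `Σ_{k≥2} l_k < ∞` (below indexed by `m = k - 2`) such that for every `x` with infinite ROE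
and every `k ≥ 2`,
`b_{k-1}(d_{k-1}(x)) / (a_{k-1}(d_{k-1}(x)) · d_{k-1}(x) · (d_{k-1}(x) - 1)) < l_k`.
Then for every `k ≥ 2` and every positive integer `i`, the set of `x ∈ (0,1)` with infinite ROE
whose `k`-th difference-ROE digit equals `i` has `λ({x : α_k(x) = i}) ≤ l_k`. -/
theorem measure_alpha_eq_le (a b h : ℕ → ℕ → ℕ)
    (ha : ∀ k j, 2 ≤ j → 0 < a k j) (hb : ∀ k j, 2 ≤ j → 0 < b k j)
    (hpos : ∀ k j, 2 ≤ j → 0 < h k j)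
    (hab : ∀ k j, 2 ≤ j → b k j * h k j = a k j * j * (j - 1))
    (l : ℕ → ℝ) (hlpos : ∀ k, 2 ≤ k → 0 < l k)
    (hlsum : Summable fun m : ℕ => l (m + 2))
    (hH : ∀ x : ℝ, InfiniteROE a b x → ∀ m : ℕ,
      (b m (D a b x m) : ℝ) /
          ((a m (D a b x m) : ℝ) * (D a b x m : ℝ) * ((D a b x m : ℝ) - 1)) < l (m + 2))
    (k : ℕ) (hk : 2 ≤ k) (i : ℕ) (hi : 1 ≤ i) :
    volume {x : ℝ | x ∈ Set.Ioo (0 : ℝ) 1 ∧ InfiniteROE a b x ∧ alpha a b h x (k - 1) = i} ≤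
      ENNReal.ofReal (l k) :=
  measure_alpha_eq_le_general a b h ha hb hab l hH k hk i

end ROE
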